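/- Let ι be a nonempty finite index type and for each i ∈ ι let (S i, A i, P i, J i, γ) be a finite MDP with common discount factor γ ∈ [0,1), with locally optimal value functions V_i* (the unique fixed points of the local Bellman optimality operators). Suppose for each i the policy π_i : S i → A i attains the minimum in the local Bellman optimality equation, i.e., J i x (π_i x) + γ ∑_{y ∈ S i} P i x (π_i x) y · V_i*(y) = min_{b ∈ A i} (J i x b + γ ∑_{y ∈ S i} P i x b y · V_i*(y)) for all x ∈ S i. Then the product policy π : (∏ i, S i) → (∏ i, A i) defined by (π s) i = π_i (s i) attains the minimum in the Bellman optimality equation of the product MDP at its optimal value function V*: for all s, J(s, π s) + γ ∑_{s'} P s (π s) s' · V*(s') = min_{a} (J(s,a) + γ ∑_{s'} P s a s' · V*(s')). -/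

import Mathlib

/-!
Adding the local optimal value functions, `W s = ∑ i, Vᵢ* (s i)`, gives a fixed point of the
product Bellman operator: under the product kernel the expectation of a separable function is the
sum of the local expectations, so the product Q-function is the sum of the local Q-functions, and
the minimum over product actions of a separable sum is the sum of the coordinatewise minima. Since
the Bellman operator is a `γ`-contraction in the sup norm, `V* = W`, and the same decomposition shows
that the product of locally greedy policies is greedy for `W`.
-/

open Finset

section ProductSums

variable {ι R : Type*} [Fintype ι] [DecidableEq ι] {S : ι → Type*} [∀ i, Fintype (S i)]
  [CommSemiring R] {p : ∀ i, S i → R}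

theorem sum_pi_prod_eq_one (hp : ∀ i, ∑ y, p i y = 1) :
    ∑ s : ∀ i, S i, ∏ i, p i (s i) = 1 := by
  simp [← Fintype.prod_sum, hp]

theorem sum_pi_prod_mul_apply (hp : ∀ i, ∑ y, p i y = 1)
    (g : ∀ i, S i → R) (j : ι) :
    ∑ s : ∀ i, S i, (∏ i, p i (s i)) * g j (s j) = ∑ y, p j y * g j y := by
  have hfactor : ∀ s : ∀ i, S i,
      (∏ i, p i (s i)) * g j (s j) = ∏ i, p i (s i) * (if i = j then g i (s i) else 1) := by
    intro s
    rw [prod_mul_distrib, Fintype.prod_ite_eq']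
  rw [sum_congr rfl fun s _ => hfactor s,
    ← Fintype.prod_sum fun i y => p i y * if i = j then g i y else 1,
    Fintype.prod_eq_single j fun i hi => by simp [hi, hp i]]
  simp

theorem sum_pi_prod_mul_sum_apply (hp : ∀ i, ∑ y, p i y = 1)
    (g : ∀ i, S i → R) :
    ∑ s : ∀ i, S i, (∏ i, p i (s i)) * ∑ i, g i (s i) = ∑ i, ∑ y, p i y * g i y := by
  simp_rw [mul_sum]
  rw [sum_comm]
  exact sum_congr rfl fun j _ => sum_pi_prod_mul_apply hp g j

end ProductSums

theorem inf'_univ_pi_sum {ι M : Type*} [Fintype ι] [DecidableEq ι] {A : ι → Type*}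
    [∀ i, Fintype (A i)] [∀ i, Nonempty (A i)]
    [AddCommMonoid M] [LinearOrder M] [IsOrderedAddMonoid M] (f : ∀ i, A i → M) :
    univ.inf' univ_nonempty (fun a : ∀ i, A i => ∑ i, f i (a i)) =
      ∑ i, univ.inf' univ_nonempty (f i) := by
  refine le_antisymm ?_ (le_inf' _ _ fun a _ => sum_le_sum fun i _ => inf'_le _ (mem_univ _))
  choose b hb using fun i => exists_mem_eq_inf' (univ_nonempty (α := A i)) (f i)
  calc univ.inf' univ_nonempty (fun a : ∀ i, A i => ∑ i, f i (a i))
      ≤ ∑ i, f i (b i) := inf'_le _ (mem_univ _)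
    _ = ∑ i, univ.inf' univ_nonempty (f i) := sum_congr rfl fun i _ => (hb i).2.symm

theorem abs_inf'_sub_inf'_le {α M : Type*} [AddCommGroup M] [LinearOrder M] [IsOrderedAddMonoid M]
    {s : Finset α} (hs : s.Nonempty) {f g : α → M} {ε : M} (hfg : ∀ a ∈ s, |f a - g a| ≤ ε) :
    |s.inf' hs f - s.inf' hs g| ≤ ε := by
  have inf'_sub_le : ∀ f g : α → M, (∀ a ∈ s, |f a - g a| ≤ ε) →
      s.inf' hs f - ε ≤ s.inf' hs g :=
    fun f g h => le_inf' _ _ fun a ha =>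
      (sub_le_sub_right (inf'_le _ ha) ε).trans (sub_le_comm.mp (le_abs_self _ |>.trans (h a ha)))
  rw [abs_sub_le_iff]
  constructor
  · exact sub_le_comm.mp (inf'_sub_le f g hfg)
  · exact sub_le_comm.mp (inf'_sub_le g f fun a ha => abs_sub_comm (g a) (f a) ▸ hfg a ha)

theorem abs_sum_mul_sub_sum_mul_le_norm {X : Type*} [Fintype X] {p : X → ℝ}
    (hp0 : ∀ x, 0 ≤ p x) (hp1 : ∑ x, p x = 1) (V W : X → ℝ) :
    |∑ x, p x * V x - ∑ x, p x * W x| ≤ ‖V - W‖ := by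
  rw [← sum_sub_distrib]
  calc |∑ x, (p x * V x - p x * W x)| ≤ ∑ x, |p x * V x - p x * W x| := abs_sum_le_sum_abs _ _
    _ = ∑ x, p x * ‖(V - W) x‖ := by
        simp_rw [← mul_sub, abs_mul, abs_of_nonneg (hp0 _), Real.norm_eq_abs, Pi.sub_apply]
    _ ≤ ∑ x, p x * ‖V - W‖ := sum_le_sum fun x _ => by gcongr; exacts [hp0 x, norm_le_pi_norm _ x]
    _ = ‖V - W‖ := by rw [← sum_mul, hp1, one_mul]

namespace FiniteMDP

variable {X B : Type*} [Fintype X]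

def qValue (c : X → B → ℝ) (p : X → B → X → ℝ) (γ : ℝ) (V : X → ℝ) (s : X) (a : B) : ℝ :=
  c s a + γ * ∑ s', p s a s' * V s'

variable [Fintype B] [Nonempty B]

def bellmanOp (c : X → B → ℝ) (p : X → B → X → ℝ) (γ : ℝ) (V : X → ℝ) (s : X) : ℝ :=
  univ.inf' univ_nonempty (qValue c p γ V s)

variable {c : X → B → ℝ} {p : X → B → X → ℝ} {γ : ℝ}

theorem abs_bellmanOp_sub_le (hp0 : ∀ s a s', 0 ≤ p s a s') (hp1 : ∀ s a, ∑ s', p s a s' = 1)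
    (hγ0 : 0 ≤ γ) (V W : X → ℝ) (s : X) :
    |bellmanOp c p γ V s - bellmanOp c p γ W s| ≤ γ * ‖V - W‖ :=
  abs_inf'_sub_inf'_le _ fun a _ => by
    rw [qValue, qValue, add_sub_add_left_eq_sub, ← mul_sub, abs_mul, abs_of_nonneg hγ0]
    exact mul_le_mul_of_nonneg_left
      (abs_sum_mul_sub_sum_mul_le_norm (hp0 s a) (hp1 s a) V W) hγ0

theorem bellmanOp_fixedPoint_unique (hp0 : ∀ s a s', 0 ≤ p s a s')
    (hp1 : ∀ s a, ∑ s', p s a s' = 1) (hγ0 : 0 ≤ γ) (hγ1 : γ < 1) {V W : X → ℝ}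
    (hV : bellmanOp c p γ V = V) (hW : bellmanOp c p γ W = W) : V = W := by
  have hcontract : ‖V - W‖ ≤ γ * ‖V - W‖ :=
    (pi_norm_le_iff_of_nonneg (by positivity)).mpr fun s => by
      simpa only [hV, hW, Real.norm_eq_abs, Pi.sub_apply] using
        abs_bellmanOp_sub_le (c := c) hp0 hp1 hγ0 V W s
  have hzero : ‖V - W‖ = 0 := by nlinarith [norm_nonneg (V - W)]
  exact sub_eq_zero.mp (norm_eq_zero.mp hzero)

section Product

variable {ι : Type*} [Fintype ι] {S A : ι → Type*}

def piCost (J : ∀ i, S i → A i → ℝ) (s : ∀ i, S i) (a : ∀ i, A i) : ℝ :=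
  ∑ i, J i (s i) (a i)

def piTrans (P : ∀ i, S i → A i → S i → ℝ) (s : ∀ i, S i) (a : ∀ i, A i) (s' : ∀ i, S i) : ℝ :=
  ∏ i, P i (s i) (a i) (s' i)

def piValue (V : ∀ i, S i → ℝ) (s : ∀ i, S i) : ℝ :=
  ∑ i, V i (s i)

variable {P : ∀ i, S i → A i → S i → ℝ}

theorem piTrans_nonneg (hP0 : ∀ i x b y, 0 ≤ P i x b y) (s : ∀ i, S i) (a : ∀ i, A i)
    (s' : ∀ i, S i) : 0 ≤ piTrans P s a s' :=
  prod_nonneg fun i _ => hP0 i _ _ _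

variable [DecidableEq ι] [∀ i, Fintype (S i)]

theorem sum_piTrans (hP1 : ∀ i x b, ∑ y, P i x b y = 1) (s : ∀ i, S i) (a : ∀ i, A i) :
    ∑ s', piTrans P s a s' = 1 :=
  sum_pi_prod_eq_one fun i => hP1 i (s i) (a i)

theorem qValue_piValue (hP1 : ∀ i x b, ∑ y, P i x b y = 1) (J : ∀ i, S i → A i → ℝ) (γ : ℝ)
    (V : ∀ i, S i → ℝ) (s : ∀ i, S i) (a : ∀ i, A i) :
    qValue (piCost J) (piTrans P) γ (piValue V) s a =
      ∑ i, qValue (J i) (P i) γ (V i) (s i) (a i) := by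
  simp only [qValue, piCost, piTrans, piValue]
  rw [sum_pi_prod_mul_sum_apply fun i => hP1 i (s i) (a i), mul_sum, sum_add_distrib]

variable [∀ i, Fintype (A i)] [∀ i, Nonempty (A i)]

theorem bellmanOp_piValue (hP1 : ∀ i x b, ∑ y, P i x b y = 1) (J : ∀ i, S i → A i → ℝ) (γ : ℝ)
    (V : ∀ i, S i → ℝ) :
    bellmanOp (piCost J) (piTrans P) γ (piValue V) =
      piValue fun i => bellmanOp (J i) (P i) γ (V i) := by
  funext s
  simp only [bellmanOp, qValue_piValue hP1]
  exact inf'_univ_pi_sum fun i => qValue (J i) (P i) γ (V i) (s i)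

end Product

end FiniteMDP

open FiniteMDP

theorem product_policy_attains_bellman_min_general
    {ι : Type*} [Fintype ι] [DecidableEq ι]
    (S A : ι → Type*)
    [∀ i, Fintype (S i)]
    [∀ i, Fintype (A i)] [∀ i, Nonempty (A i)]
    (P : ∀ i, S i → A i → S i → ℝ)
    (hP0 : ∀ i, ∀ (x : S i) (b : A i) (y : S i), 0 ≤ P i x b y)
    (hP1 : ∀ i, ∀ (x : S i) (b : A i), ∑ y : S i, P i x b y = 1)
    (J : ∀ i, S i → A i → ℝ)
    (γ : ℝ) (hγ0 : 0 ≤ γ) (hγ1 : γ < 1)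
    -- `Vistar i` is the (unique) fixed point of the `i`-th local Bellman
    -- optimality operator:
    (Vistar : ∀ i, S i → ℝ)
    (hVistar : ∀ i, ∀ x : S i,
      Vistar i x = Finset.univ.inf' Finset.univ_nonempty
        (fun b : A i => J i x b + γ * ∑ y : S i, P i x b y * Vistar i y))
    -- `Vstar` is the (unique) fixed point of the Bellman optimality operator
    -- of the product MDP:
    (Vstar : (∀ i, S i) → ℝ)
    (hVstar : ∀ s : ∀ i, S i,
      Vstar s = Finset.univ.inf' Finset.univ_nonempty
        (fun a : ∀ i, A i =>
          (∑ i, J i (s i) (a i)) +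
            γ * ∑ s' : ∀ i, S i, (∏ i, P i (s i) (a i) (s' i)) * Vstar s'))
    -- each local policy attains the minimum in the local Bellman equation:
    (π : ∀ i, S i → A i)
    (hπ : ∀ i, ∀ x : S i,
      J i x (π i x) + γ * ∑ y : S i, P i x (π i x) y * Vistar i y =
        Finset.univ.inf' Finset.univ_nonempty
          (fun b : A i => J i x b + γ * ∑ y : S i, P i x b y * Vistar i y)) :
    ∀ s : ∀ i, S i,
      (∑ i, J i (s i) (π i (s i))) +
          γ * ∑ s' : ∀ i, S i,
            (∏ i, P i (s i) (π i (s i)) (s' i)) * Vstar s' =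
        Finset.univ.inf' Finset.univ_nonempty
          (fun a : ∀ i, A i =>
            (∑ i, J i (s i) (a i)) +
              γ * ∑ s' : ∀ i, S i, (∏ i, P i (s i) (a i) (s' i)) * Vstar s') := by
  have hlocal : (fun i => bellmanOp (J i) (P i) γ (Vistar i)) = Vistar :=
    funext fun i => funext fun x => (hVistar i x).symm
  have hVstar_eq : Vstar = piValue Vistar := by
    refine bellmanOp_fixedPoint_unique (c := piCost J) (piTrans_nonneg hP0) (sum_piTrans hP1)
      hγ0 hγ1 (funext fun s => (hVstar s).symm) ?_
    rw [bellmanOp_piValue hP1, hlocal]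
  subst hVstar_eq
  intro s
  change qValue (piCost J) (piTrans P) γ (piValue Vistar) s (fun i => π i (s i)) =
    bellmanOp (piCost J) (piTrans P) γ (piValue Vistar) s
  rw [qValue_piValue hP1, bellmanOp_piValue hP1]
  exact sum_congr rfl fun i _ => hπ i (s i)

/-- If each local policy `πᵢ` attains the minimum in the local Bellman
optimality equation at the local optimal value function `Vᵢ*`, then the product
policy `(π s) i = πᵢ (s i)` attains the minimum in the Bellman optimality
equation of the product MDP at its optimal value function `V*`. -/
theorem product_policy_attains_bellman_min
    {ι : Type*} [Fintype ι] [DecidableEq ι] [Nonempty ι]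
    (S A : ι → Type*)
    [∀ i, Fintype (S i)] [∀ i, Nonempty (S i)]
    [∀ i, Fintype (A i)] [∀ i, Nonempty (A i)]
    (P : ∀ i, S i → A i → S i → ℝ)
    (hP0 : ∀ i, ∀ (x : S i) (b : A i) (y : S i), 0 ≤ P i x b y)
    (hP1 : ∀ i, ∀ (x : S i) (b : A i), ∑ y : S i, P i x b y = 1)
    (J : ∀ i, S i → A i → ℝ)
    (γ : ℝ) (hγ0 : 0 ≤ γ) (hγ1 : γ < 1)
    -- `Vistar i` is the (unique) fixed point of the `i`-th local Bellman
    -- optimality operator: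
    (Vistar : ∀ i, S i → ℝ)
    (hVistar : ∀ i, ∀ x : S i,
      Vistar i x = Finset.univ.inf' Finset.univ_nonempty
        (fun b : A i => J i x b + γ * ∑ y : S i, P i x b y * Vistar i y))
    -- `Vstar` is the (unique) fixed point of the Bellman optimality operator
    -- of the product MDP:
    (Vstar : (∀ i, S i) → ℝ)
    (hVstar : ∀ s : ∀ i, S i,
      Vstar s = Finset.univ.inf' Finset.univ_nonempty
        (fun a : ∀ i, A i =>
          (∑ i, J i (s i) (a i)) +
            γ * ∑ s' : ∀ i, S i, (∏ i, P i (s i) (a i) (s' i)) * Vstar s'))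
    -- each local policy attains the minimum in the local Bellman equation:
    (π : ∀ i, S i → A i)
    (hπ : ∀ i, ∀ x : S i,
      J i x (π i x) + γ * ∑ y : S i, P i x (π i x) y * Vistar i y =
        Finset.univ.inf' Finset.univ_nonempty
          (fun b : A i => J i x b + γ * ∑ y : S i, P i x b y * Vistar i y)) :
    ∀ s : ∀ i, S i,
      (∑ i, J i (s i) (π i (s i))) +
          γ * ∑ s' : ∀ i, S i,
            (∏ i, P i (s i) (π i (s i)) (s' i)) * Vstar s' =
        Finset.univ.inf' Finset.univ_nonempty
          (fun a : ∀ i, A i =>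
            (∑ i, J i (s i) (a i)) +
              γ * ∑ s' : ∀ i, S i, (∏ i, P i (s i) (a i) (s' i)) * Vstar s') :=
  product_policy_attains_bellman_min_general S A P hP0 hP1 J γ hγ0 hγ1 Vistar hVistar Vstar hVstar π
    hπ
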